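/- (Fleming's bound for mixed states.) Let ρ be a density operator on a finite-dimensional Hilbert space, Π the orthogonal projection onto the range of ρ, and h self-adjoint. Then Tr(Π e^{−iht} ρ e^{iht}) ≥ cos²((Δh)_ρ t) for all real t with (Δh)_ρ |t| ≤ π/2, where (Δh)²_ρ = Tr(h²ρ) − (Tr(hρ))². -/

import Mathlib

/-!
Write `U = e^{-iht}`. Diagonalising `ρ = ∑ pᵢ |vᵢ⟩⟨vᵢ|`, every `vᵢ` with `pᵢ ≠ 0` is fixed by
`Π`, so `tr (ρ U) = ∑ pᵢ ⟪vᵢ, Π U vᵢ⟫`, and Cauchy–Schwarz gives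
`|tr (ρ U)|² ≤ ∑ pᵢ ‖Π U vᵢ‖² = tr (Π U ρ U*)`. In an eigenbasis `eₖ` of `h` with eigenvalues `Eₖ`,
`tr (ρ U) = ∑ qₖ e^{-itEₖ}` is the characteristic function of the distribution `qₖ = ⟪eₖ, ρ eₖ⟫`,
whose variance is `(Δh)²_ρ`. The tangent line of `y ↦ cos √y` at any `s² ≤ (π/2)²` lies below its
graph, so Jensen's inequality gives `|∑ qₖ e^{-itEₖ}| ≥ ∑ qₖ cos (t (Eₖ - ⟨E⟩)) ≥ cos ((Δh)_ρ t)`.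
-/

open scoped InnerProductSpace
open Complex Filter Asymptotics

noncomputable section

variable {H : Type*} [NormedAddCommGroup H] [InnerProductSpace ℂ H] [FiniteDimensional ℂ H]

/-- |φ⟩⟨ψ| -/
def ketbra (φ ψ : H) : H →L[ℂ] H := (innerSL ℂ ψ).smulRight φ

def tr (A : H →L[ℂ] H) : ℂ := LinearMap.trace ℂ H A.toLinearMap

/-- e^{-iht} -/
def timeEv (h : H →L[ℂ] H) (t : ℝ) : H →L[ℂ] H :=
  NormedSpace.exp ((-(Complex.I * (t : ℂ))) • h)

def expVec (h : H →L[ℂ] H) (φ : H) : ℝ := (⟪φ, h φ⟫_ℂ).re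
def varVec (h : H →L[ℂ] H) (φ : H) : ℝ := (⟪φ, h (h φ)⟫_ℂ).re - (expVec h φ) ^ 2
def expMix (h ρ : H →L[ℂ] H) : ℝ := (tr (h ∘L ρ)).re
def varMix (h ρ : H →L[ℂ] H) : ℝ := (tr (h ∘L h ∘L ρ)).re - (expMix h ρ) ^ 2
def survP (h : H →L[ℂ] H) (φ : H) (t : ℝ) : ℝ := ‖⟪φ, timeEv h t φ⟫_ℂ‖ ^ 2
def survPMix (h ρ Pr : H →L[ℂ] H) (t : ℝ) : ℝ :=
  (tr (Pr ∘L timeEv h t ∘L ρ ∘L timeEv h (-t))).re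

namespace Real

theorem mul_sin_le_mul_sin_of_le_of_le_pi {x s : ℝ} (hx : 0 ≤ x) (hxs : x ≤ s) (hs : s ≤ π) :
    x * sin s ≤ s * sin x := by
  rcases (hx.trans hxs).eq_or_lt with rfl | hs0
  · simp [le_antisymm hxs hx]
  have hconc := strictConcaveOn_sin_Icc.concaveOn.2 (Set.mem_Icc.2 ⟨hs0.le, hs⟩)
    (Set.mem_Icc.2 ⟨le_rfl, pi_nonneg⟩) (div_nonneg hx hs0.le)
    (sub_nonneg.2 (div_le_one_of_le₀ hxs hs0.le)) (add_sub_cancel _ _)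
  simp only [smul_eq_mul, mul_zero, add_zero, div_mul_cancel₀ _ hs0.ne', sin_zero] at hconc
  rw [div_mul_eq_mul_div, div_le_iff₀ hs0] at hconc
  linarith

theorem mul_sin_le_mul_sin_of_le_of_le_pi_div_two {x s : ℝ} (hs : 0 ≤ s) (hsx : s ≤ x)
    (hs2 : s ≤ π / 2) : s * sin x ≤ x * sin s := by
  rcases le_or_gt x π with hxπ | hxπ
  · exact mul_sin_le_mul_sin_of_le_of_le_pi hs hsx hxπ
  -- Jordan's inequality `2 s / π ≤ sin s` beats `sin x ≤ 1` once `x > π`.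
  have hjordan : 2 / π * s ≤ sin s := mul_le_sin hs hs2
  have hsin_s : 0 ≤ sin s := sin_nonneg_of_nonneg_of_le_pi hs (hs2.trans (by linarith [pi_pos]))
  have : π * (2 / π * s) = 2 * s := by field_simp
  nlinarith [sin_le_one x, pi_pos]

/-- The tangent line of `y ↦ cos √y` at `s ^ 2` lies below its graph. -/
theorem exists_cos_sub_cos_le_mul_sq_sub_sq {s : ℝ} (hs : 0 ≤ s) (hs2 : s ≤ π / 2) :
    ∃ c, ∀ x, cos s - cos x ≤ c * (x ^ 2 - s ^ 2) := by
  rcases hs.eq_or_lt with rfl | hs0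
  · exact ⟨1 / 2, fun x => by linarith [one_sub_sq_div_two_le_cos (x := x), cos_zero]⟩
  refine ⟨sin s / (2 * s), fun x => ?_⟩
  set G : ℝ → ℝ := fun y => 2 * s * cos y + sin s * y ^ 2
  have hG : ∀ y, HasDerivAt G (2 * (y * sin s - s * sin y)) y := fun y => by
    refine (((hasDerivAt_cos y).const_mul (2 * s)).add
      ((hasDerivAt_pow 2 y).const_mul (sin s))).congr_deriv ?_
    norm_num
    ring
  have hGcont : Continuous G := by fun_prop
  have hG_abs : G |x| = G x := by simp only [G, cos_abs, sq_abs]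
  have hmin : G s ≤ G |x| := by
    rcases le_total |x| s with hxs | hsx
    · refine antitoneOn_of_deriv_nonpos (convex_Icc 0 s) hGcont.continuousOn
        (fun y _ => (hG y).differentiableAt.differentiableWithinAt) (fun y hy => ?_)
        ⟨abs_nonneg x, hxs⟩ ⟨hs, le_rfl⟩ hxs
      rw [interior_Icc] at hy
      rw [(hG y).deriv]
      linarith [mul_sin_le_mul_sin_of_le_of_le_pi hy.1.le hy.2.le
        (hs2.trans (by linarith [pi_pos]))]
    · refine monotoneOn_of_deriv_nonneg (convex_Icc s |x|) hGcont.continuousOn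
        (fun y _ => (hG y).differentiableAt.differentiableWithinAt) (fun y hy => ?_)
        ⟨le_rfl, hsx⟩ ⟨hsx, le_rfl⟩ hsx
      rw [interior_Icc] at hy
      rw [(hG y).deriv]
      linarith [mul_sin_le_mul_sin_of_le_of_le_pi_div_two hs hy.1.le hs2]
  rw [hG_abs] at hmin
  rw [div_mul_eq_mul_div, le_div_iff₀ (by positivity)]
  simp only [G] at hmin
  linarith

theorem cos_le_sum_mul_cos {ι : Type*} [Fintype ι] {q x : ι → ℝ} (hq : ∀ i, 0 ≤ q i)
    (hq1 : ∑ i, q i = 1) {s : ℝ} (hs : 0 ≤ s) (hs2 : s ≤ π / 2)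
    (hx : ∑ i, q i * x i ^ 2 = s ^ 2) : cos s ≤ ∑ i, q i * cos (x i) := by
  obtain ⟨c, hc⟩ := exists_cos_sub_cos_le_mul_sq_sub_sq hs hs2
  have : ∑ i, q i * (cos s - cos (x i)) ≤ ∑ i, q i * (c * (x i ^ 2 - s ^ 2)) :=
    Finset.sum_le_sum fun i _ => mul_le_mul_of_nonneg_left (hc (x i)) (hq i)
  have hL : ∑ i, q i * (cos s - cos (x i)) = cos s - ∑ i, q i * cos (x i) := by
    simp only [mul_sub, Finset.sum_sub_distrib, ← Finset.sum_mul, hq1, one_mul]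
  have hR : ∑ i, q i * (c * (x i ^ 2 - s ^ 2)) = 0 := by
    simp only [mul_left_comm (q _), ← Finset.mul_sum, mul_sub, Finset.sum_sub_distrib,
      ← Finset.sum_mul, hq1, hx]
    ring
  linarith

theorem cos_le_norm_sum_mul_exp {ι : Type*} [Fintype ι] {q E : ι → ℝ} (hq : ∀ i, 0 ≤ q i)
    (hq1 : ∑ i, q i = 1) {V t : ℝ} (hV : ∑ i, q i * E i ^ 2 - (∑ i, q i * E i) ^ 2 = V)
    (ht : √V * |t| ≤ π / 2) :
    cos (√V * t) ≤ ‖∑ i, (q i : ℂ) * Complex.exp ((t * E i : ℝ) * I)‖ := by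
  set m := ∑ i, q i * E i
  have hV' : ∑ i, q i * (E i - m) ^ 2 = V := by
    have hexpand : ∀ i, q i * (E i - m) ^ 2 = q i * E i ^ 2 - 2 * m * (q i * E i) + m ^ 2 * q i :=
      fun i => by ring
    rw [← hV, Finset.sum_congr rfl fun i _ => hexpand i, Finset.sum_add_distrib,
      Finset.sum_sub_distrib, ← Finset.mul_sum, ← Finset.mul_sum, hq1]
    ring
  have hV0 : 0 ≤ V := hV' ▸ Finset.sum_nonneg fun i _ => mul_nonneg (hq i) (sq_nonneg _)
  have hcos := cos_le_sum_mul_cos hq hq1 (x := fun i => t * (E i - m)) (by positivity) ht (by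
    rw [mul_pow, sq_sqrt hV0, sq_abs, ← hV', Finset.sum_mul]
    exact Finset.sum_congr rfl fun i _ => by ring)
  calc cos (√V * t) = cos (√V * |t|) := by
        rw [← cos_abs, abs_mul, abs_of_nonneg (sqrt_nonneg V)]
    _ ≤ ∑ i, q i * cos (t * (E i - m)) := hcos
    _ = (Complex.exp ((-(t * m) : ℝ) * I) *
          ∑ i, (q i : ℂ) * Complex.exp ((t * E i : ℝ) * I)).re := by
        rw [Finset.mul_sum, re_sum]
        refine Finset.sum_congr rfl fun i _ => ?_
        rw [mul_left_comm, ← Complex.exp_add, ← add_mul, ← ofReal_add, re_ofReal_mul,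
          exp_ofReal_mul_I_re]
        ring_nf
    _ ≤ ‖Complex.exp ((-(t * m) : ℝ) * I) *
          ∑ i, (q i : ℂ) * Complex.exp ((t * E i : ℝ) * I)‖ := re_le_norm _
    _ = ‖∑ i, (q i : ℂ) * Complex.exp ((t * E i : ℝ) * I)‖ := by
        rw [norm_mul, norm_exp_ofReal_mul_I, one_mul]

end Real

theorem NormedSpace.exp_apply_of_apply_eq_smul {V : Type*} [NormedAddCommGroup V]
    [NormedSpace ℂ V] [CompleteSpace V] {A : V →L[ℂ] V} {c : ℂ} {v : V} (hv : A v = c • v) :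
    NormedSpace.exp A v = Complex.exp c • v := by
  have hpow : ∀ n : ℕ, (A ^ n) v = c ^ n • v := fun n => by
    induction n with
    | zero => simp
    | succ n ih => rw [pow_succ, mul_apply_eq_comp, hv, map_smul, ih, smul_smul, pow_succ']
  have hA := (NormedSpace.exp_series_hasSum_exp' (𝕂 := ℂ) A).mapL (ContinuousLinearMap.apply ℂ V v)
  have hc := (NormedSpace.exp_series_hasSum_exp' (𝕂 := ℂ) c).smul_const v
  simp only [ContinuousLinearMap.apply_apply, smul_apply, hpow, smul_smul,
    smul_eq_mul] at hA hc
  rw [Complex.exp_eq_exp_ℂ]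
  exact hA.unique hc

theorem timeEv_apply_of_apply_eq_smul {h : H →L[ℂ] H} {E : ℝ} {v : H} (hv : h v = (E : ℂ) • v)
    (t : ℝ) : timeEv h t v = Complex.exp ((-t * E : ℝ) * I) • v := by
  rw [timeEv, NormedSpace.exp_apply_of_apply_eq_smul (c := -(I * t) * E)]
  · congr 2
    push_cast
    ring
  · rw [smul_apply, hv, smul_smul]

theorem adjoint_timeEv {h : H →L[ℂ] H} (hh : IsSelfAdjoint h) (t : ℝ) :
    ContinuousLinearMap.adjoint (timeEv h t) = timeEv h (-t) := by
  rw [← ContinuousLinearMap.star_eq_adjoint, timeEv, timeEv, NormedSpace.star_exp, star_smul,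
    hh.star_eq]
  congr 2
  simp

theorem tr_comp_comm (A B : H →L[ℂ] H) : tr (A ∘L B) = tr (B ∘L A) :=
  LinearMap.trace_comp_comm' B.toLinearMap A.toLinearMap

set_option linter.unusedSectionVars false in
theorem tr_comp_eq_sum_of_apply_eq_smul {ι : Type*} [Fintype ι] (b : OrthonormalBasis ι ℂ H)
    (A B : H →L[ℂ] H) {c : ι → ℂ} (hB : ∀ i, B (b i) = c i • b i) :
    tr (A ∘L B) = ∑ i, c i * ⟪b i, A (b i)⟫_ℂ := by
  rw [tr, LinearMap.trace_eq_sum_inner _ b]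
  refine Finset.sum_congr rfl fun i _ => ?_
  rw [ContinuousLinearMap.coe_coe, ContinuousLinearMap.comp_apply, hB,
    map_smul, inner_smul_right]

theorem inner_apply_self_eq_norm_sq {𝕜 V : Type*} [RCLike 𝕜] [NormedAddCommGroup V]
    [InnerProductSpace 𝕜 V] [CompleteSpace V] {P : V →L[𝕜] V} (hP : IsSelfAdjoint P)
    (hPid : IsIdempotentElem P) (x : V) : ⟪x, P x⟫_𝕜 = ((‖P x‖ ^ 2 : ℝ) : 𝕜) :=
  calc ⟪x, P x⟫_𝕜 = ⟪x, P (P x)⟫_𝕜 := by rw [show P (P x) = P x from congr($hPid.eq x)]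
    _ = ⟪P x, P x⟫_𝕜 := (hP.isSymmetric x (P x)).symm
    _ = ((‖P x‖ ^ 2 : ℝ) : 𝕜) := by rw [inner_self_eq_norm_sq_to_K]; push_cast; rfl

theorem re_tr_conj_eq_sum_mul_norm_sq {ρ P : H →L[ℂ] H} (hP : IsSelfAdjoint P)
    (hPid : IsIdempotentElem P) (U : H →L[ℂ] H) {ι : Type*} [Fintype ι]
    (v : OrthonormalBasis ι ℂ H) {p : ι → ℝ} (hv : ∀ i, ρ (v i) = (p i : ℂ) • v i) :
    (tr (P ∘L U ∘L ρ ∘L ContinuousLinearMap.adjoint U)).re = ∑ i, p i * ‖P (U (v i))‖ ^ 2 := by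
  rw [show P ∘L U ∘L ρ ∘L ContinuousLinearMap.adjoint U
      = (P ∘L U ∘L ρ) ∘L ContinuousLinearMap.adjoint U from rfl, tr_comp_comm,
    show ContinuousLinearMap.adjoint U ∘L P ∘L U ∘L ρ
      = (ContinuousLinearMap.adjoint U ∘L P ∘L U) ∘L ρ from rfl,
    tr_comp_eq_sum_of_apply_eq_smul v _ ρ hv, re_sum]
  refine Finset.sum_congr rfl fun i _ => ?_
  rw [ContinuousLinearMap.comp_apply, ContinuousLinearMap.comp_apply,
    ContinuousLinearMap.adjoint_inner_right, inner_apply_self_eq_norm_sq hP hPid, re_ofReal_mul]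
  rfl

theorem norm_tr_comp_sq_le_re_tr_conj {ρ P : H →L[ℂ] H} (hρ : ρ.IsPositive) (hρtr : tr ρ = 1)
    (hP : IsSelfAdjoint P) (hPid : IsIdempotentElem P)
    (hrange : LinearMap.range ρ.toLinearMap ≤ LinearMap.range P.toLinearMap) (U : H →L[ℂ] H) :
    ‖tr (ρ ∘L U)‖ ^ 2 ≤ (tr (P ∘L U ∘L ρ ∘L ContinuousLinearMap.adjoint U)).re := by
  set v := hρ.isSymmetric.eigenvectorBasis rfl
  set p := hρ.isSymmetric.eigenvalues rfl
  have hv : ∀ i, ρ (v i) = (p i : ℂ) • v i := hρ.isSymmetric.apply_eigenvectorBasis rfl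
  have hp0 : ∀ i, 0 ≤ p i := hρ.toLinearMap.nonneg_eigenvalues rfl
  have hp1 : ∑ i, p i = 1 := by
    have := hρ.isSymmetric.re_trace_eq_sum_eigenvalues rfl
    rwa [← tr, hρtr, RCLike.one_re, eq_comm] at this
  have hPv : ∀ i, p i ≠ 0 → P (v i) = v i := by
    intro i hi
    have hvi : v i ∈ LinearMap.range ρ.toLinearMap := ⟨(p i : ℂ)⁻¹ • v i, by
      rw [ContinuousLinearMap.coe_coe, map_smul, hv, smul_smul,
        inv_mul_cancel₀ (ofReal_ne_zero.2 hi), one_smul]⟩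
    obtain ⟨w, hw⟩ := hrange hvi
    rw [← hw]
    exact congr($hPid.eq w)
  have hamp : tr (ρ ∘L U) = ∑ i, (p i : ℂ) * ⟪v i, U (v i)⟫_ℂ := by
    rw [tr_comp_comm, tr_comp_eq_sum_of_apply_eq_smul v U ρ hv]
  have hbound : ‖tr (ρ ∘L U)‖ ≤ ∑ i, p i * ‖P (U (v i))‖ := by
    rw [hamp]
    refine (norm_sum_le _ _).trans (Finset.sum_le_sum fun i _ => ?_)
    rw [norm_mul, norm_real, Real.norm_of_nonneg (hp0 i)]
    rcases eq_or_ne (p i) 0 with h0 | h0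
    · simp [h0]
    refine mul_le_mul_of_nonneg_left ?_ (hp0 i)
    have : ⟪v i, P (U (v i))⟫_ℂ = ⟪P (v i), U (v i)⟫_ℂ := (hP.isSymmetric _ _).symm
    rw [hPv i h0] at this
    simpa [this, v.orthonormal.1 i] using norm_inner_le_norm (𝕜 := ℂ) (v i) (P (U (v i)))
  calc ‖tr (ρ ∘L U)‖ ^ 2 ≤ (∑ i, p i * ‖P (U (v i))‖) ^ 2 :=
        pow_le_pow_left₀ (norm_nonneg _) hbound 2
    _ ≤ (∑ i, p i) * ∑ i, p i * ‖P (U (v i))‖ ^ 2 :=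
        Finset.sum_sq_le_sum_mul_sum_of_sq_le_mul _ (fun i _ => hp0 i)
          (fun i _ => mul_nonneg (hp0 i) (sq_nonneg _)) (fun i _ => le_of_eq (by ring))
    _ = _ := by rw [hp1, one_mul, re_tr_conj_eq_sum_mul_norm_sq hP hPid U v hv]

theorem cos_le_norm_tr_comp_timeEv {h ρ : H →L[ℂ] H} (hh : IsSelfAdjoint h)
    (hρ : ρ.IsPositive) (hρtr : tr ρ = 1) {t : ℝ} (ht : √(varMix h ρ) * |t| ≤ Real.pi / 2) :
    Real.cos (√(varMix h ρ) * t) ≤ ‖tr (ρ ∘L timeEv h t)‖ := by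
  set e := hh.isSymmetric.eigenvectorBasis rfl
  set E := hh.isSymmetric.eigenvalues rfl
  have he : ∀ k, h (e k) = (E k : ℂ) • e k := hh.isSymmetric.apply_eigenvectorBasis rfl
  set q := fun k => (⟪e k, ρ (e k)⟫_ℂ).re
  have hq : ∀ k, ⟪e k, ρ (e k)⟫_ℂ = q k := fun k =>
    eq_re_of_ofReal_le (r := 0) (by simpa using hρ.inner_nonneg_right (e k))
  have hq0 : ∀ k, 0 ≤ q k := fun k => hρ.re_inner_nonneg_right (e k)
  have hq1 : ∑ k, q k = 1 := by
    have := LinearMap.trace_eq_sum_inner ρ.toLinearMap e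
    change tr ρ = _ at this
    simp only [hρtr, ContinuousLinearMap.coe_coe, hq] at this
    exact_mod_cast this.symm
  have hmean : tr (h ∘L ρ) = ∑ k, ((q k * E k : ℝ) : ℂ) := by
    rw [tr_comp_comm, tr_comp_eq_sum_of_apply_eq_smul e ρ h he]
    simp [hq, mul_comm]
  have hsq : tr (h ∘L h ∘L ρ) = ∑ k, ((q k * E k ^ 2 : ℝ) : ℂ) := by
    rw [show h ∘L h ∘L ρ = (h ∘L h) ∘L ρ from rfl, tr_comp_comm,
      tr_comp_eq_sum_of_apply_eq_smul e ρ (h ∘L h) (c := fun k => E k * E k)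
        fun k => by rw [ContinuousLinearMap.comp_apply, he, map_smul, he, smul_smul]]
    refine Finset.sum_congr rfl fun k _ => ?_
    rw [hq]
    push_cast
    ring
  have hamp : tr (ρ ∘L timeEv h t) = ∑ k, (q k : ℂ) * exp ((-t * E k : ℝ) * I) := by
    rw [tr_comp_eq_sum_of_apply_eq_smul e ρ (timeEv h t)
      fun k => timeEv_apply_of_apply_eq_smul (he k) t]
    simp [hq, mul_comm]
  have hV : ∑ k, q k * E k ^ 2 - (∑ k, q k * E k) ^ 2 = varMix h ρ := by
    rw [varMix, expMix, hmean, hsq, ← ofReal_sum, ← ofReal_sum, ofReal_re, ofReal_re]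
  have := Real.cos_le_norm_sum_mul_exp hq0 hq1 hV (t := -t) (by rwa [abs_neg])
  rwa [mul_neg, Real.cos_neg, ← hamp] at this

theorem stmt17 (h ρ Pr : H →L[ℂ] H) (hsa : IsSelfAdjoint h)
    (hρpos : ρ.IsPositive) (hρtr : tr ρ = 1)
    (hPrsa : IsSelfAdjoint Pr) (hPrid : IsIdempotentElem Pr)
    (hPrrange : LinearMap.range Pr.toLinearMap = LinearMap.range ρ.toLinearMap) :
    ∀ t : ℝ, Real.sqrt (varMix h ρ) * |t| ≤ Real.pi / 2 →
      survPMix h ρ Pr t ≥ Real.cos (Real.sqrt (varMix h ρ) * t) ^ 2 := by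
  intro t ht
  have hcos := cos_le_norm_tr_comp_timeEv hsa hρpos hρtr ht
  have hcos0 : 0 ≤ Real.cos (√(varMix h ρ) * t) := by
    rw [← abs_of_nonneg (Real.sqrt_nonneg (varMix h ρ)), ← abs_mul] at ht
    exact Real.cos_nonneg_of_neg_pi_div_two_le_of_le (abs_le.1 ht).1 (abs_le.1 ht).2
  have hsurv := norm_tr_comp_sq_le_re_tr_conj hρpos hρtr hPrsa hPrid hPrrange.ge (timeEv h t)
  rw [adjoint_timeEv hsa] at hsurv
  exact (pow_le_pow_left₀ hcos0 hcos 2).trans hsurv
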